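/- Let X be a right A-Galois object. If ψ¹ and ψ² are two nonzero invariant functionals on X, then there exists a scalar c ∈ k such that ψ¹ = c·ψ². -/

import Mathlib

open TensorProduct

noncomputable section

variable (k : Type*) [Field k]

/-- Apply a linear functional to the second tensor factor. -/
def applySnd {M N : Type*} [AddCommGroup M] [Module k M]
    [AddCommGroup N] [Module k N] (f : N →ₗ[k] k) : M ⊗[k] N →ₗ[k] M :=
  (TensorProduct.rid k M).toLinearMap ∘ₗ LinearMap.lTensor M f

/-- Apply a linear functional to the first tensor factor. -/
def applyFst {M N : Type*} [AddCommGroup M] [Module k M]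
    [AddCommGroup N] [Module k N] (f : M →ₗ[k] k) : M ⊗[k] N →ₗ[k] N :=
  (TensorProduct.lid k N).toLinearMap ∘ₗ LinearMap.rTensor N f

variable (A X : Type*) [Ring A] [HopfAlgebra k A] [Ring X] [Algebra k X]

/-- The Galois map `V : X ⊗ X → X ⊗ A`, `x ⊗ y ↦ (x ⊗ 1) * α y`. -/
def galoisV (α : X →ₐ[k] X ⊗[k] A) : X ⊗[k] X →ₗ[k] X ⊗[k] A :=
  LinearMap.mul' k (X ⊗[k] A) ∘ₗ
    TensorProduct.map ((TensorProduct.mk k X A).flip 1) α.toLinearMap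

/-- A Hopf algebra with bijective antipode and faithful left integral `φ`,
together with a right Galois coaction `α` on `X` with trivial coinvariants. -/
structure GaloisContext where
  φ : A →ₗ[k] k
  φ_ne : φ ≠ 0
  φ_integral : ∀ a : A, applySnd k φ (Coalgebra.comul a) = φ a • (1 : A)
  φ_faithful_left : ∀ a : A, (∀ b : A, φ (a * b) = 0) → a = 0
  φ_faithful_right : ∀ a : A, (∀ b : A, φ (b * a) = 0) → a = 0
  antipode_bijective : Function.Bijective (HopfAlgebra.antipode (R := k) (A := A))
  α : X →ₐ[k] X ⊗[k] A
  coassoc : ∀ x : X,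
    TensorProduct.assoc k X A A ((LinearMap.rTensor A α.toLinearMap) (α x))
      = LinearMap.lTensor X (Coalgebra.comul (R := k) (A := A)) (α x)
  counit_id : ∀ x : X,
    applySnd k (Coalgebra.counit (R := k) (A := A)) (α x) = x
  coinv_trivial : ∀ x : X, α x = x ⊗ₜ[k] (1 : A) → ∃ c : k, x = c • (1 : X)
  galois : Function.Bijective (galoisV k A X α)

variable {k A X}

/-- The Galois map as a linear equivalence. -/
def GaloisContext.V (G : GaloisContext k A X) : (X ⊗[k] X) ≃ₗ[k] (X ⊗[k] A) :=
  LinearEquiv.ofBijective (galoisV k A X G.α) G.galois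

/-- The map `β : A → X ⊗ X`, `a ↦ V⁻¹(1 ⊗ a)`. -/
def GaloisContext.β (G : GaloisContext k A X) : A →ₗ[k] X ⊗[k] X :=
  G.V.symm.toLinearMap ∘ₗ TensorProduct.mk k X A 1

end

/-!
For an invariant `ψ`, the map `c ↦ (id ⊗ ψ) V⁻¹(1 ⊗ c)` is an `X`-valued right integral on `A`
(coassociativity of the Galois map), so by uniqueness of right integrals, which follows from
strong invariance and faithfulness of `φ`, it equals `c ↦ φ(S c) x_ψ`. Feeding `V⁻¹(α z) = 1 ⊗ z`
into this gives `ψ(z) 1 = q(z) x_ψ` with `q(z) = (id ⊗ φ S) α(z)`, so `x_ψ` has a left inverse `l`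
once `ψ ≠ 0`. The same uniqueness produces a modular group-like `g` with `α(q z) = q z ⊗ g` and
`α(x_ψ) = x_ψ ⊗ S g`; hence `x_ψ l` is coinvariant, thus a scalar, thus `1`. Then `q = ψ(·) l` for
one nonzero `ψ`, and `ψ₁(z) 1 = q(z) x_{ψ₁} = ψ(z) l x_{ψ₁}` forces `ψ₁` to be proportional to `ψ`.
-/
open TensorProduct LinearMap Coalgebra

section Contraction

variable {k : Type*} [Field k] {M N P : Type*} [AddCommGroup M] [Module k M]
  [AddCommGroup N] [Module k N] [AddCommGroup P] [Module k P]

@[simp] lemma applySnd_tmul (f : N →ₗ[k] k) (m : M) (n : N) :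
    applySnd k f (m ⊗ₜ n) = f n • m := by
  simp [applySnd]

@[simp] lemma applyFst_tmul (f : M →ₗ[k] k) (m : M) (n : N) :
    applyFst k f (m ⊗ₜ n) = f m • n := by
  simp [applyFst]

lemma applySnd_rTensor (f : N →ₗ[k] k) (g : M →ₗ[k] P) (t : M ⊗[k] N) :
    applySnd k f (g.rTensor N t) = g (applySnd k f t) := by
  induction t using TensorProduct.induction_on with
  | zero => simp
  | tmul m n => simp
  | add u v hu hv => simp [hu, hv]

lemma apply_applyFst_eq_apply_applySnd (f : M →ₗ[k] k) (ℓ : N →ₗ[k] k) (t : M ⊗[k] N) :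
    ℓ (applyFst k f t) = f (applySnd k ℓ t) := by
  induction t using TensorProduct.induction_on with
  | zero => simp
  | tmul m n => simp [mul_comm]
  | add u v hu hv => simp [hu, hv]

lemma lTensor_smulRight (f : N →ₗ[k] k) (x : P) (t : M ⊗[k] N) :
    (f.smulRight x).lTensor M t = applySnd k f t ⊗ₜ x := by
  induction t using TensorProduct.induction_on with
  | zero => simp
  | tmul m n => simp [smul_tmul']
  | add u v hu hv => simp [hu, hv, add_tmul]

lemma rTensor_smulRight (f : M →ₗ[k] k) (x : P) (t : M ⊗[k] N) :
    (f.smulRight x).rTensor N t = x ⊗ₜ applyFst k f t := by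
  induction t using TensorProduct.induction_on with
  | zero => simp
  | tmul m n => simp [smul_tmul]
  | add u v hu hv => simp [hu, hv, tmul_add]

lemma applySnd_assoc_symm (f : P →ₗ[k] k) (u : M ⊗[k] (N ⊗[k] P)) :
    applySnd k f ((TensorProduct.assoc k M N P).symm u) = (applySnd k f).lTensor M u := by
  induction u using TensorProduct.induction_on with
  | zero => simp
  | tmul m w =>
    induction w using TensorProduct.induction_on with
    | zero => simp
    | tmul n p => simp
    | add s t hs ht => simp_all [tmul_add]
  | add u v hu hv => simp [hu, hv]

lemma rTensor_applySnd_assoc_symm (f : N →ₗ[k] k) (u : M ⊗[k] (N ⊗[k] P)) :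
    (applySnd k f (M := M)).rTensor P ((TensorProduct.assoc k M N P).symm u)
      = (applyFst k f).lTensor M u := by
  induction u using TensorProduct.induction_on with
  | zero => simp
  | tmul m w =>
    induction w using TensorProduct.induction_on with
    | zero => simp
    | tmul n p => simp [smul_tmul]
    | add s t hs ht => simp_all [tmul_add]
  | add u v hu hv => simp [hu, hv]

lemma eq_zero_of_forall_applyFst_eq_zero {t : M ⊗[k] N}
    (h : ∀ ℓ : M →ₗ[k] k, applyFst k ℓ t = 0) : t = 0 := by
  classical
  let b := Module.Basis.ofVectorSpace k M
  apply (equivFinsuppOfBasisLeft b).injective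
  ext i
  rw [equivFinsuppOfBasisLeft_apply, map_zero, Finsupp.zero_apply]
  exact h (b.coord i)

lemma eq_zero_of_tmul_eq_zero {m : M} {n : N} (hm : m ≠ 0) (h : m ⊗ₜ[k] n = 0) : n = 0 := by
  obtain ⟨ℓ, hℓ⟩ := Module.Projective.exists_dual_eq_one k hm
  simpa [hℓ] using congrArg (applyFst k ℓ) h

lemma applySnd_tmul_one_mul {B C : Type*} [Ring B] [Algebra k B] [Ring C] [Algebra k C]
    (f : C →ₗ[k] k) (x : B) (t : B ⊗[k] C) :
    applySnd k f ((x ⊗ₜ[k] (1 : C)) * t) = x * applySnd k f t := by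
  induction t using TensorProduct.induction_on with
  | zero => simp
  | tmul p q => simp [Algebra.TensorProduct.tmul_mul_tmul]
  | add u v hu hv => simp [mul_add, hu, hv]

lemma applySnd_comp_mulLeft {B C : Type*} [Ring B] [Algebra k B] [Ring C] [Algebra k C]
    (f : C →ₗ[k] k) (c : C) (t : B ⊗[k] C) :
    applySnd k (f ∘ₗ mulLeft k c) t = applySnd k f (((1 : B) ⊗ₜ[k] c) * t) := by
  induction t using TensorProduct.induction_on with
  | zero => simp
  | tmul p q => simp [Algebra.TensorProduct.tmul_mul_tmul]
  | add u v hu hv => simp [mul_add, hu, hv]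

end Contraction

section Coalgebra

variable {k : Type*} [Field k] {C : Type*} [AddCommGroup C] [Module k C] [Coalgebra k C]

local notation "Δ" => comul (R := k) (A := C)
local notation "ε" => counit (R := k) (A := C)

lemma applySnd_counit_comul (c : C) : applySnd k ε (Δ c) = c := by
  simp [applySnd, lTensor_counit_comul]

lemma applyFst_counit_comul (c : C) : applyFst k ε (Δ c) = c := by
  simp [applyFst, rTensor_counit_comul]

lemma isGroupLikeElem_of_applySnd_comul_eq_smul {ω : C →ₗ[k] k} (hω : ω ≠ 0) {g : C}
    (h : ∀ c, applySnd k ω (Δ c) = ω c • g) : IsGroupLikeElem k g := by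
  obtain ⟨c, hc⟩ := LinearMap.surjective_of_ne_zero hω 1
  have hsmul : applySnd k ω ∘ₗ Δ = ω.smulRight g := LinearMap.ext h
  have hcomul : Δ (applySnd k ω (Δ c)) = applySnd k ω (Δ c) ⊗ₜ g := by
    rw [← applySnd_rTensor, ← coassoc_symm_apply, applySnd_assoc_symm, ← LinearMap.comp_apply,
      ← lTensor_comp, hsmul, lTensor_smulRight]
  have hcounit : ε (applySnd k ω (Δ c)) = ω c := by
    rw [← apply_applyFst_eq_apply_applySnd, applyFst_counit_comul]
  rw [h, hc, one_smul] at hcomul hcounit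
  exact ⟨hcounit, hcomul⟩

end Coalgebra

section Integral

variable {k : Type*} [Field k] {A : Type*} [Ring A] [HopfAlgebra k A]

local notation "Δ" => comul (R := k) (A := A)
local notation "S" => HopfAlgebra.antipode k (A := A)

def IsLeftIntegral (φ : A →ₗ[k] k) : Prop := ∀ a, applySnd k φ (Δ a) = φ a • (1 : A)

def IsRightIntegral (ψ : A →ₗ[k] k) : Prop := ∀ a, applyFst k ψ (Δ a) = ψ a • (1 : A)

def antipodeLeftMul : A ⊗[k] (A ⊗[k] A) →ₗ[k] A ⊗[k] A :=
  mul' k (A ⊗[k] A) ∘ₗ TensorProduct.map ((TensorProduct.mk k A A).flip 1 ∘ₗ S) LinearMap.id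

lemma antipodeLeftMul_tmul (x : A) (t : A ⊗[k] A) :
    antipodeLeftMul (x ⊗ₜ t) = (S x ⊗ₜ[k] (1 : A)) * t :=
  rfl

lemma antipodeLeftMul_lTensor_comul_comul (a : A) :
    antipodeLeftMul (LinearMap.lTensor A Δ (Δ a)) = (1 : A) ⊗ₜ[k] a := by
  have hassoc : antipodeLeftMul ∘ₗ (TensorProduct.assoc k A A A).toLinearMap
      = (mul' k A ∘ₗ LinearMap.rTensor A S).rTensor A := by
    apply TensorProduct.ext_threefold
    intro x y z
    simp [antipodeLeftMul_tmul, Algebra.TensorProduct.tmul_mul_tmul]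
  rw [← coassoc_apply, ← LinearEquiv.coe_coe, ← LinearMap.comp_apply, hassoc,
    ← LinearMap.comp_apply, ← rTensor_comp, LinearMap.comp_assoc,
    HopfAlgebra.mul_antipode_rTensor_comul, rTensor_comp, LinearMap.comp_apply,
    rTensor_counit_comul]
  simp [Algebra.algebraMap_eq_smul_one]

/-- Strong left invariance: `b₍₁₎ φ(a b₍₂₎) = S(a₍₁₎) φ(a₍₂₎ b)`. -/
lemma IsLeftIntegral.applySnd_comp_mulLeft_comul {φ : A →ₗ[k] k} (hφ : IsLeftIntegral φ)
    (a b : A) :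
    applySnd k (φ ∘ₗ mulLeft k a) (Δ b) = S (applySnd k (φ ∘ₗ mulRight k b) (Δ a)) := by
  have key : ∀ t : A ⊗[k] A, applySnd k φ (antipodeLeftMul (LinearMap.lTensor A Δ t) * Δ b)
      = S (applySnd k (φ ∘ₗ mulRight k b) t) := by
    intro t
    induction t using TensorProduct.induction_on with
    | zero => simp
    | tmul x y =>
      rw [lTensor_tmul, antipodeLeftMul_tmul, mul_assoc, ← Bialgebra.comul_mul,
        applySnd_tmul_one_mul, hφ]
      simp
    | add u v hu hv => simp [add_mul, hu, hv]
  rw [← key, antipodeLeftMul_lTensor_comul_comul, applySnd_comp_mulLeft]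

end Integral

section Uniqueness

variable {k : Type*} [Field k] {A : Type*} [Ring A] [HopfAlgebra k A] {φ : A →ₗ[k] k}
  {V : Type*} [AddCommGroup V] [Module k V]

local notation "Δ" => comul (R := k) (A := A)
local notation "ε" => counit (R := k) (A := A)
local notation "S" => HopfAlgebra.antipode k (A := A)

lemma eq_of_forall_applySnd_comp_mulLeft_eq (hfaith : ∀ a, (∀ b, φ (b * a) = 0) → a = 0)
    {T T' : V ⊗[k] A}
    (h : ∀ a, applySnd k (φ ∘ₗ mulLeft k a) T = applySnd k (φ ∘ₗ mulLeft k a) T') :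
    T = T' := by
  rw [← sub_eq_zero]
  refine eq_zero_of_forall_applyFst_eq_zero fun ℓ => hfaith _ fun a => ?_
  simpa [h a] using apply_applyFst_eq_apply_applySnd ℓ (φ ∘ₗ mulLeft k a) (T - T')

/-- Uniqueness of `V`-valued right integrals. -/
theorem IsLeftIntegral.exists_eq_smul_of_rTensor_comul (hφ : IsLeftIntegral φ)
    (hfaith : ∀ a, (∀ b, φ (b * a) = 0) → a = 0) (hφ0 : φ ≠ 0) (hS : Function.Bijective S)
    (γ : A →ₗ[k] V) (hγ : ∀ a, γ.rTensor A (Δ a) = γ a ⊗ₜ (1 : A)) :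
    ∃ x₀ : V, ∀ c, γ c = φ (S c) • x₀ := by
  let S' := LinearEquiv.ofBijective S hS
  let γ' := γ ∘ₗ S'.symm.toLinearMap
  have key : ∀ a b, applySnd k (φ ∘ₗ mulLeft k a) (γ'.rTensor A (Δ b)) = φ b • γ a := by
    intro a b
    have h := congrArg (applySnd k (φ ∘ₗ mulRight k b)) (hγ a)
    rw [applySnd_rTensor, applySnd_tmul] at h
    rw [applySnd_rTensor, LinearMap.comp_apply, hφ.applySnd_comp_mulLeft_comul]
    simpa [γ', S'] using h
  obtain ⟨b₀, hb₀⟩ := LinearMap.surjective_of_ne_zero hφ0 1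
  have hW : ∀ b, γ'.rTensor A (Δ b) = φ b • γ'.rTensor A (Δ b₀) := fun b =>
    eq_of_forall_applySnd_comp_mulLeft_eq hfaith fun a => by
      rw [map_smul, key, key, hb₀, one_smul]
  refine ⟨applySnd k ε (γ'.rTensor A (Δ b₀)), fun c => ?_⟩
  have h := congrArg (applySnd k ε) (hW (S c))
  rwa [map_smul, applySnd_rTensor, applySnd_counit_comul, LinearMap.comp_apply,
    LinearEquiv.coe_coe, show S'.symm (S c) = c from S'.symm_apply_apply c] at h

lemma isRightIntegral_of_rTensor_comul_smulRight {ω : A →ₗ[k] k} {x : V} (hx : x ≠ 0)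
    (h : ∀ a, (ω.smulRight x).rTensor A (Δ a) = ω.smulRight x a ⊗ₜ (1 : A)) :
    IsRightIntegral ω := by
  intro a
  have hxa := h a
  rw [rTensor_smulRight, smulRight_apply, smul_tmul] at hxa
  refine sub_eq_zero.mp (eq_zero_of_tmul_eq_zero (k := k) hx ?_)
  rw [tmul_sub, hxa, sub_self]

theorem IsLeftIntegral.exists_applySnd_comul_eq_smul (hφ : IsLeftIntegral φ)
    (hfaith : ∀ a, (∀ b, φ (b * a) = 0) → a = 0) (hφ0 : φ ≠ 0) (hS : Function.Bijective S)
    (hψ : IsRightIntegral (φ ∘ₗ S)) :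
    ∃ g : A, ∀ a, applySnd k (φ ∘ₗ S) (Δ a) = (φ ∘ₗ S) a • g := by
  have hsmul : applyFst k (φ ∘ₗ S) ∘ₗ Δ = (φ ∘ₗ S).smulRight 1 := LinearMap.ext hψ
  refine hφ.exists_eq_smul_of_rTensor_comul hfaith hφ0 hS (applySnd k (φ ∘ₗ S) ∘ₗ Δ) fun a => ?_
  rw [rTensor_comp, LinearMap.comp_apply, ← coassoc_symm_apply, rTensor_applySnd_assoc_symm,
    ← LinearMap.comp_apply, ← lTensor_comp, hsmul, lTensor_smulRight]
  rfl

end Uniqueness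

namespace GaloisContext

variable {k : Type*} [Field k] {A X : Type*} [Ring A] [HopfAlgebra k A] [Ring X] [Algebra k X]
  (G : GaloisContext k A X)

local notation "Δ" => comul (R := k) (A := A)
local notation "S" => HopfAlgebra.antipode k (A := A)

lemma galoisV_tmul (x y : X) : galoisV k A X G.α (x ⊗ₜ y) = (x ⊗ₜ[k] (1 : A)) * G.α y :=
  rfl

lemma galoisV_tmul_one_mul (x : X) (u : X ⊗[k] X) :
    galoisV k A X G.α ((x ⊗ₜ[k] (1 : X)) * u) = (x ⊗ₜ[k] (1 : A)) * galoisV k A X G.α u := by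
  induction u using TensorProduct.induction_on with
  | zero => simp
  | tmul p q => simp [galoisV_tmul, ← mul_assoc, Algebra.TensorProduct.tmul_mul_tmul]
  | add u v hu hv => simp [mul_add, hu, hv]

lemma galoisV_beta (a : A) : galoisV k A X G.α (G.β a) = (1 : X) ⊗ₜ a :=
  G.V.apply_symm_apply _

lemma V_symm_tmul (x : X) (a : A) : G.V.symm (x ⊗ₜ a) = (x ⊗ₜ[k] (1 : X)) * G.β a := by
  rw [LinearEquiv.symm_apply_eq]
  change _ = galoisV k A X G.α _
  rw [galoisV_tmul_one_mul, galoisV_beta, Algebra.TensorProduct.tmul_mul_tmul, mul_one, one_mul]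

lemma V_symm_alpha (y : X) : G.V.symm (G.α y) = (1 : X) ⊗ₜ y := by
  rw [LinearEquiv.symm_apply_eq]
  change _ = galoisV k A X G.α _
  rw [galoisV_tmul, ← Algebra.TensorProduct.one_def, one_mul]

lemma rTensor_galoisV_assoc_symm_tmul (x : X) (w : X ⊗[k] A) :
    (galoisV k A X G.α).rTensor A ((TensorProduct.assoc k X X A).symm (x ⊗ₜ w))
      = ((x ⊗ₜ[k] (1 : A)) ⊗ₜ[k] (1 : A)) * G.α.toLinearMap.rTensor A w := by
  induction w using TensorProduct.induction_on with
  | zero => simp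
  | tmul p q => simp [galoisV_tmul, Algebra.TensorProduct.tmul_mul_tmul]
  | add u v hu hv => simp [tmul_add, mul_add, hu, hv]

lemma lTensor_comul_galoisV (u : X ⊗[k] X) :
    LinearMap.lTensor X Δ (galoisV k A X G.α u)
      = TensorProduct.assoc k X A A ((galoisV k A X G.α).rTensor A
          ((TensorProduct.assoc k X X A).symm (G.α.toLinearMap.lTensor X u))) := by
  induction u using TensorProduct.induction_on with
  | zero => simp
  | tmul x y =>
    have hcomul : ∀ s t : X ⊗[k] A, LinearMap.lTensor X Δ (s * t)
        = LinearMap.lTensor X Δ s * LinearMap.lTensor X Δ t :=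
      map_mul (Algebra.TensorProduct.map (AlgHom.id k X) (Bialgebra.comulAlgHom k A))
    have hassoc : ∀ s t : (X ⊗[k] A) ⊗[k] A, TensorProduct.assoc k X A A (s * t)
        = TensorProduct.assoc k X A A s * TensorProduct.assoc k X A A t :=
      map_mul (Algebra.TensorProduct.assoc k k k X A A)
    rw [galoisV_tmul, hcomul, ← G.coassoc y, lTensor_tmul, lTensor_tmul,
      rTensor_galoisV_assoc_symm_tmul, hassoc]
    simp [Algebra.TensorProduct.one_def]
  | add u v hu hv => simp [hu, hv]

lemma rTensor_beta_comul (a : A) :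
    G.β.rTensor A (Δ a)
      = (TensorProduct.assoc k X X A).symm (G.α.toLinearMap.lTensor X (G.β a)) := by
  apply (LinearEquiv.rTensor A G.V).injective
  apply (TensorProduct.assoc k X A A).injective
  change TensorProduct.assoc k X A A ((galoisV k A X G.α).rTensor A _)
    = TensorProduct.assoc k X A A ((galoisV k A X G.α).rTensor A _)
  rw [← lTensor_comul_galoisV, galoisV_beta, lTensor_tmul, ← LinearMap.comp_apply,
    ← rTensor_comp]
  generalize Δ a = t
  induction t using TensorProduct.induction_on with
  | zero => simp
  | tmul p q => simp [galoisV_beta]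
  | add u v hu hv => simp [tmul_add, hu, hv]

variable {ψ : X →ₗ[k] k} {ω : A →ₗ[k] k} {x : X}

lemma rTensor_applySnd_beta_comul (hψ : ∀ x, applyFst k ψ (G.α x) = ψ x • (1 : A)) (a : A) :
    (applySnd k ψ ∘ₗ G.β).rTensor A (Δ a) = applySnd k ψ (G.β a) ⊗ₜ (1 : A) := by
  have hsmul : applyFst k ψ ∘ₗ G.α.toLinearMap = ψ.smulRight 1 := LinearMap.ext hψ
  rw [rTensor_comp, LinearMap.comp_apply, rTensor_beta_comul, rTensor_applySnd_assoc_symm,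
    ← LinearMap.comp_apply, ← lTensor_comp, hsmul, lTensor_smulRight]

lemma exists_applySnd_beta_eq_smul (hψ : ∀ x, applyFst k ψ (G.α x) = ψ x • (1 : A)) :
    ∃ x : X, ∀ c, applySnd k ψ (G.β c) = (G.φ ∘ₗ S) c • x :=
  IsLeftIntegral.exists_eq_smul_of_rTensor_comul G.φ_integral G.φ_faithful_right G.φ_ne
    G.antipode_bijective _ (G.rTensor_applySnd_beta_comul hψ)

lemma applySnd_V_symm (hx : ∀ c, applySnd k ψ (G.β c) = ω c • x) (t : X ⊗[k] A) :
    applySnd k ψ (G.V.symm t) = applySnd k ω t * x := by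
  induction t using TensorProduct.induction_on with
  | zero => simp
  | tmul y a => simp [V_symm_tmul, applySnd_tmul_one_mul, hx]
  | add u v hu hv => simp [add_mul, hu, hv]

lemma smul_one_eq_applySnd_alpha_mul (hx : ∀ c, applySnd k ψ (G.β c) = ω c • x) (z : X) :
    ψ z • (1 : X) = applySnd k ω (G.α z) * x := by
  simpa [V_symm_alpha] using G.applySnd_V_symm hx (G.α z)

lemma alpha_applySnd_alpha {g : A} (hg : ∀ a, applySnd k ω (Δ a) = ω a • g) (z : X) :
    G.α (applySnd k ω (G.α z)) = applySnd k ω (G.α z) ⊗ₜ g := by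
  have hsmul : applySnd k ω ∘ₗ Δ = ω.smulRight g := LinearMap.ext hg
  have hcoassoc : G.α.toLinearMap.rTensor A (G.α z)
      = (TensorProduct.assoc k X A A).symm (LinearMap.lTensor X Δ (G.α z)) :=
    (LinearEquiv.eq_symm_apply _).mpr (G.coassoc z)
  rw [← AlgHom.toLinearMap_apply, ← applySnd_rTensor, hcoassoc, applySnd_assoc_symm,
    ← LinearMap.comp_apply, ← lTensor_comp, hsmul, lTensor_smulRight]

lemma applySnd_galoisV_tmul_mul_alpha {g : A} (hg : ∀ a, applySnd k ω (Δ a) = ω a • g)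
    (hx : ∀ c, applySnd k ψ (G.β c) = ω c • x) (u : X ⊗[k] X) :
    (applySnd k ω (galoisV k A X G.α u) ⊗ₜ g) * G.α x = applySnd k ψ u ⊗ₜ (1 : A) := by
  induction u using TensorProduct.induction_on with
  | zero => simp
  | tmul y z =>
    have hsplit : (y * applySnd k ω (G.α z)) ⊗ₜ g
        = (y ⊗ₜ[k] (1 : A)) * G.α (applySnd k ω (G.α z)) := by
      rw [G.alpha_applySnd_alpha hg, Algebra.TensorProduct.tmul_mul_tmul, one_mul]
    rw [galoisV_tmul, applySnd_tmul_one_mul, hsplit, mul_assoc, ← map_mul,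
      ← G.smul_one_eq_applySnd_alpha_mul hx]
    simp [smul_tmul']
  | add u v hu hv => simp [add_tmul, add_mul, hu, hv]

lemma alpha_eq_tmul_antipode {g : A} (hg : ∀ a, applySnd k ω (Δ a) = ω a • g)
    (hgS : S g * g = 1) (hx : ∀ c, applySnd k ψ (G.β c) = ω c • x) {a₀ : A} (ha₀ : ω a₀ = 1) :
    G.α x = x ⊗ₜ S g := by
  have h := G.applySnd_galoisV_tmul_mul_alpha hg hx (G.V.symm (1 ⊗ₜ a₀))
  rw [show galoisV k A X G.α (G.V.symm (1 ⊗ₜ a₀)) = 1 ⊗ₜ a₀ from G.V.apply_symm_apply _,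
    G.applySnd_V_symm hx] at h
  simp only [applySnd_tmul, ha₀, one_smul, one_mul] at h
  calc G.α x = ((1 : X) ⊗ₜ S g) * (((1 : X) ⊗ₜ g) * G.α x) := by
        rw [← mul_assoc, Algebra.TensorProduct.tmul_mul_tmul, one_mul, hgS,
          ← Algebra.TensorProduct.one_def, one_mul]
    _ = x ⊗ₜ S g := by rw [h, Algebra.TensorProduct.tmul_mul_tmul, one_mul, mul_one]

lemma mul_eq_one_of_alpha {l : X} {g : A} (hx : G.α x = x ⊗ₜ S g) (hl : G.α l = l ⊗ₜ g)
    (hgS : S g * g = 1) (hlx : l * x = 1) : x * l = 1 := by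
  obtain ⟨c, hc⟩ := G.coinv_trivial (x * l) (by
    rw [map_mul, hx, hl, Algebra.TensorProduct.tmul_mul_tmul, hgS])
  calc x * l = c • 1 := hc
    _ = l * (c • 1) * x := by rw [mul_smul_comm, mul_one, smul_mul_assoc, hlx]
    _ = 1 := by rw [← hc, ← mul_assoc, hlx, one_mul, hlx]

theorem exists_applySnd_alpha_eq_smul [Nontrivial X]
    (hψ : ∀ x, applyFst k ψ (G.α x) = ψ x • (1 : A)) (hψ0 : ψ ≠ 0) :
    ∃ l : X, ∀ z, applySnd k (G.φ ∘ₗ S) (G.α z) = ψ z • l := by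
  obtain ⟨x, hx⟩ := G.exists_applySnd_beta_eq_smul hψ
  obtain ⟨z₀, hz₀⟩ := LinearMap.surjective_of_ne_zero hψ0 1
  set l := applySnd k (G.φ ∘ₗ S) (G.α z₀)
  have hlx : l * x = 1 := by rw [← G.smul_one_eq_applySnd_alpha_mul hx, hz₀, one_smul]
  have hω0 : G.φ ∘ₗ S ≠ 0 := by
    intro h
    simp [l, h, applySnd] at hlx
  have hright : IsRightIntegral (G.φ ∘ₗ S) := by
    have hsmul : applySnd k ψ ∘ₗ G.β = (G.φ ∘ₗ S).smulRight x := LinearMap.ext hx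
    refine isRightIntegral_of_rTensor_comul_smulRight (right_ne_zero_of_mul_eq_one hlx) ?_
    simpa [hsmul, hx] using G.rTensor_applySnd_beta_comul hψ
  obtain ⟨g, hg⟩ := IsLeftIntegral.exists_applySnd_comul_eq_smul G.φ_integral
    G.φ_faithful_right G.φ_ne G.antipode_bijective hright
  have hgS := (isGroupLikeElem_of_applySnd_comul_eq_smul hω0 hg).antipode_mul_cancel
  obtain ⟨a₀, ha₀⟩ := LinearMap.surjective_of_ne_zero hω0 1
  have hxl := G.mul_eq_one_of_alpha (G.alpha_eq_tmul_antipode hg hgS hx ha₀)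
    (G.alpha_applySnd_alpha hg z₀) hgS hlx
  refine ⟨l, fun z => ?_⟩
  rw [← mul_one (applySnd k _ _), ← hxl, ← mul_assoc, ← G.smul_one_eq_applySnd_alpha_mul hx,
    smul_mul_assoc, one_mul]

end GaloisContext

theorem galois_object_invariant_functional_unique_general
    {k : Type*} [Field k] {A X : Type*} [Ring A] [HopfAlgebra k A]
    [Ring X] [Algebra k X] [Nontrivial X]
    (G : GaloisContext k A X)
    (ψ₁ ψ₂ : X →ₗ[k] k) (hψ₂_ne : ψ₂ ≠ 0)
    (hψ₁ : ∀ x : X, applyFst k ψ₁ (G.α x) = ψ₁ x • (1 : A))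
    (hψ₂ : ∀ x : X, applyFst k ψ₂ (G.α x) = ψ₂ x • (1 : A)) :
    ∃ c : k, ψ₁ = c • ψ₂ := by
  obtain ⟨l, hl⟩ := G.exists_applySnd_alpha_eq_smul hψ₂ hψ₂_ne
  obtain ⟨x₁, hx₁⟩ := G.exists_applySnd_beta_eq_smul hψ₁
  have h : ∀ z, ψ₁ z • (1 : X) = ψ₂ z • (l * x₁) := fun z => by
    rw [G.smul_one_eq_applySnd_alpha_mul hx₁, hl, smul_mul_assoc]
  obtain ⟨z₂, hz₂⟩ := LinearMap.surjective_of_ne_zero hψ₂_ne 1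
  have hlx₁ : l * x₁ = ψ₁ z₂ • (1 : X) := by rw [h z₂, hz₂, one_smul]
  refine ⟨ψ₁ z₂, LinearMap.ext fun z => smul_left_injective k (one_ne_zero : (1 : X) ≠ 0) ?_⟩
  change ψ₁ z • (1 : X) = (ψ₁ z₂ • ψ₂) z • (1 : X)
  rw [h z, hlx₁, smul_smul, LinearMap.smul_apply, smul_eq_mul, mul_comm]

theorem galois_object_invariant_functional_unique
    {k : Type*} [Field k] {A X : Type*} [Ring A] [HopfAlgebra k A]
    [Ring X] [Algebra k X] [Nontrivial X]
    (G : GaloisContext k A X)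
    (ψ₁ ψ₂ : X →ₗ[k] k) (hψ₁_ne : ψ₁ ≠ 0) (hψ₂_ne : ψ₂ ≠ 0)
    (hψ₁ : ∀ x : X, applyFst k ψ₁ (G.α x) = ψ₁ x • (1 : A))
    (hψ₂ : ∀ x : X, applyFst k ψ₂ (G.α x) = ψ₂ x • (1 : A)) :
    ∃ c : k, ψ₁ = c • ψ₂ :=
  galois_object_invariant_functional_unique_general G ψ₁ ψ₂ hψ₂_ne hψ₁ hψ₂
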